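/- Let M = (L, μ0, Σ, δ) be an MDP. If there exists a (randomized) strategy α such that M with strategy α is weakly synchronizing, then there exists a pure strategy β such that M with strategy β is weakly synchronizing. -/

import Mathlib

open Filter

namespace SyncMDP

/-- A history: an initial state followed by a list of (action, state) steps. -/
structure Hist (L A : Type) where
  start : L
  steps : List (A × L)
deriving DecidableEq

variable {L A : Type}

/-- The last state of a history. -/
def Hist.last (h : Hist L A) : L := h.steps.foldl (fun _ p => p.2) h.start

/-- The length of a history. -/
def Hist.len (h : Hist L A) : ℕ := h.steps.length

/-- Extending a history by one action and one state. -/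
def Hist.extend (h : Hist L A) (a : A) (l : L) : Hist L A := ⟨h.start, h.steps ++ [(a, l)]⟩

/-- A probability distribution on a finite type. -/
def IsDist {S : Type} [Fintype S] (d : S → ℝ) : Prop :=
  (∀ s, 0 ≤ d s) ∧ ∑ s, d s = 1

/-- A probabilistic transition function. -/
def IsTrans [Fintype L] (δ : L → A → L → ℝ) : Prop := ∀ l a, IsDist (δ l a)

/-- A (randomized) strategy assigns a distribution over actions to every history. -/
def IsStrategy [Fintype A] (α : Hist L A → A → ℝ) : Prop :=
  ∀ h : Hist L A, (∀ a, 0 ≤ α h a) ∧ ∑ a, α h a = 1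

/-- A pure strategy plays one action with probability one after every history. -/
def PureStrat (α : Hist L A → A → ℝ) : Prop := ∀ h, ∃ a, α h a = 1

/-- A blind strategy only depends on the length of the history. -/
def BlindStrat (α : Hist L A → A → ℝ) : Prop :=
  ∀ h₁ h₂ : Hist L A, h₁.len = h₂.len → α h₁ = α h₂

/-- A memoryless strategy only depends on the last state of the history. -/
def Memoryless (α : Hist L A → A → ℝ) : Prop :=
  ∀ h₁ h₂ : Hist L A, h₁.last = h₂.last → α h₁ = α h₂

/-- Auxiliary product for the probability of a history: the first argument is the current
state, the second the history (prefix) read so far, the third the remaining steps. -/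
def prAux (δ : L → A → L → ℝ) (α : Hist L A → A → ℝ) : L → Hist L A → List (A × L) → ℝ
  | _, _, [] => 1
  | cur, pre, (a, l) :: rest => α pre a * δ cur a l * prAux δ α l (pre.extend a l) rest

/-- The probability `Pr^α(h)` of a history `h`. -/
def pr (μ0 : L → ℝ) (δ : L → A → L → ℝ) (α : Hist L A → A → ℝ) (h : Hist L A) : ℝ :=
  μ0 h.start * prAux δ α h.start ⟨h.start, []⟩ h.steps

variable (L A) in
/-- The finite set of all histories of length `n`. -/
def hists [Fintype L] [DecidableEq L] [Fintype A] [DecidableEq A] : ℕ → Finset (Hist L A)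
  | 0 => Finset.univ.image fun l : L => ⟨l, []⟩
  | n + 1 => (hists n).biUnion fun h => Finset.univ.image fun p : A × L => h.extend p.1 p.2

variable [Fintype L] [DecidableEq L] [Fintype A] [DecidableEq A]

/-- The outcome `X_n^α` : the distribution over states at step `n` under strategy `α`. -/
noncomputable def outcome (μ0 : L → ℝ) (δ : L → A → L → ℝ) (α : Hist L A → A → ℝ)
    (n : ℕ) (l : L) : ℝ :=
  ∑ h ∈ (hists L A n).filter (fun h => h.last = l), pr μ0 δ α h

/-- The norm `‖X‖ = max_{ℓ ∈ L} X(ℓ)` of a distribution on a (nonempty) finite type. -/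
noncomputable def dnorm (X : L → ℝ) : ℝ := ⨆ l, X l

/-- Strongly synchronizing: `liminf_n ‖X_n^α‖ = 1`. -/
def StronglySync (μ0 : L → ℝ) (δ : L → A → L → ℝ) (α : Hist L A → A → ℝ) : Prop :=
  liminf (fun n => dnorm (outcome μ0 δ α n)) atTop = 1

/-- Weakly synchronizing: `limsup_n ‖X_n^α‖ = 1`. -/
def WeaklySync (μ0 : L → ℝ) (δ : L → A → L → ℝ) (α : Hist L A → A → ℝ) : Prop :=
  limsup (fun n => dnorm (outcome μ0 δ α n)) atTop = 1

open Classical in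
/-- `Post_σ(ℓ)`: the support of `δ(ℓ,σ)`. -/
noncomputable def post (δ : L → A → L → ℝ) (l : L) (a : A) : Finset L :=
  Finset.univ.filter fun l' => 0 < δ l a l'

/-- Transition function of the perfect-information subset construction. -/
noncomputable def deltaP (δ : L → A → L → ℝ) (s : Finset L) (f : L → A) : Finset L :=
  s.biUnion fun l => post δ l (f l)

/-- Transition function of the blind subset construction. -/
noncomputable def deltaB (δ : L → A → L → ℝ) (s : Finset L) (a : A) : Finset L :=
  s.biUnion fun l => post δ l a

open Classical in
/-- The initial cell: the support of `μ0`. -/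
noncomputable def initCell (μ0 : L → ℝ) : Finset L :=
  Finset.univ.filter fun l => 0 < μ0 l

/-- Reachability of a cell from the initial cell in the perfect-information
subset construction. -/
def ReachP (μ0 : L → ℝ) (δ : L → A → L → ℝ) (s : Finset L) : Prop :=
  Relation.ReflTransGen (fun t t' => ∃ f : L → A, deltaP δ t f = t') (initCell μ0) s

/-- Reachability of a cell from the initial cell in the blind subset construction. -/
def ReachB (μ0 : L → ℝ) (δ : L → A → L → ℝ) (s : Finset L) : Prop :=
  Relation.ReflTransGen (fun t t' => ∃ a : A, deltaB δ t a = t') (initCell μ0) s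

/-- Cyclic successor on `Fin d`. -/
def cyc {d : ℕ} (hd : 0 < d) (i : Fin d) : Fin d := ⟨((i : ℕ) + 1) % d, Nat.mod_lt _ hd⟩

/-- A recurrent cyclic set for the cycle `(s, act)` of length `d` of the
perfect-information subset construction. -/
def IsRCSP {d : ℕ} (hd : 0 < d) (δ : L → A → L → ℝ) (s : Fin d → Finset L)
    (act : Fin d → L → A) (g : Fin d → Finset L) : Prop :=
  ∀ i : Fin d, (g i).Nonempty ∧ g i ⊆ s i ∧
    (g i).biUnion (fun l => post δ l (act i l)) = g (cyc hd i)

/-- A minimal recurrent cyclic set (perfect-information). -/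
def IsMinRCSP {d : ℕ} (hd : 0 < d) (δ : L → A → L → ℝ) (s : Fin d → Finset L)
    (act : Fin d → L → A) (g : Fin d → Finset L) : Prop :=
  IsRCSP hd δ s act g ∧
    ∀ g' : Fin d → Finset L, IsRCSP hd δ s act g' → (∀ i, g' i ⊆ g i) → g' = g

/-- A recurrent cyclic set for the cycle `(s, act)` of length `d` of the blind
subset construction. -/
def IsRCSB {d : ℕ} (hd : 0 < d) (δ : L → A → L → ℝ) (s : Fin d → Finset L)
    (act : Fin d → A) (g : Fin d → Finset L) : Prop :=
  ∀ i : Fin d, (g i).Nonempty ∧ g i ⊆ s i ∧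
    (g i).biUnion (fun l => post δ l (act i)) = g (cyc hd i)

/-- A minimal recurrent cyclic set (blind). -/
def IsMinRCSB {d : ℕ} (hd : 0 < d) (δ : L → A → L → ℝ) (s : Fin d → Finset L)
    (act : Fin d → A) (g : Fin d → Finset L) : Prop :=
  IsRCSB hd δ s act g ∧
    ∀ g' : Fin d → Finset L, IsRCSB hd δ s act g' → (∀ i, g' i ⊆ g i) → g' = g

end SyncMDP

/-!
Draw the action at every history `h` independently from `α h`. This turns `α` into a random
pure strategy `f` whose outcome at time `n` is, on average, `X_n^α`; hence
`‖X_n^α‖ ≤ 𝔼 ‖X_n^f‖`. Fix times `n_k ≥ k` with `‖X_{n_k}^α‖ > 1 - ε_k²`, where `ε_k = 2^{-(k+1)}`.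
The mean of `∑_{k<K} (1 - ‖X_{n_k}^f‖) / ε_k` is below `∑ ε_k ≤ 1`, so some pure `f` has
`‖X_{n_k}^f‖ > 1 - ε_k` for all `k < K`. Each of these conditions only depends on the values of
`f` at the finitely many histories shorter than `n_k`, so by compactness of `Hist L A → A` one
pure strategy satisfies all of them at once, and it is weakly synchronizing.
-/

theorem limsup_eq_iff_frequently_lt {u : ℕ → ℝ} {b c : ℝ} (hb : ∀ n, b ≤ u n)
    (hc : ∀ n, u n ≤ c) :
    limsup u atTop = c ↔ ∀ ε > 0, ∃ᶠ n in atTop, c - ε < u n := by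
  have hcobdd : IsCoboundedUnder (· ≤ ·) atTop u := isCoboundedUnder_le_of_le atTop hb
  constructor
  · intro hu ε hε
    exact frequently_lt_of_lt_limsup hcobdd (by linarith)
  · intro hu
    refine le_antisymm (limsup_le_of_le hcobdd (Eventually.of_forall hc)) ?_
    exact le_of_forall_sub_le fun ε hε =>
      le_limsup_of_frequently_le ((hu ε hε).mono fun _ h => h.le) (isBoundedUnder_of ⟨c, hc⟩)

theorem exists_forall_of_forall_lt {ι X : Type*} [Finite X] {P : ℕ → (ι → X) → Prop}
    (s : ℕ → Finset ι) (hP : ∀ k f g, (∀ i ∈ s k, f i = g i) → P k f → P k g)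
    (h : ∀ K, ∃ f, ∀ k < K, P k f) : ∃ f, ∀ k, P k f := by
  let : TopologicalSpace X := ⊥
  have : DiscreteTopology X := ⟨rfl⟩
  -- `{f | P k f}` is a finite union of cylinders over `s k`
  have hclosed : ∀ k, IsClosed {f | P k f} := fun k => by
    let r : (ι → X) → (s k → X) := fun f i => f i
    have hr : {f | P k f} = r ⁻¹' (r '' {f | P k f}) := by
      refine (Set.subset_preimage_image _ _).antisymm ?_
      rintro f ⟨g, hg, hgf⟩
      exact hP k g f (fun i hi => congrFun hgf ⟨i, hi⟩) hg
    rw [hr]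
    exact (Set.toFinite _).isClosed.preimage (continuous_pi fun i => continuous_apply _)
  let V : ℕ → Set (ι → X) := fun K => ⋂ k ∈ Finset.range K, {f | P k f}
  have hV : ∀ K, IsClosed (V K) := fun K => isClosed_biInter fun k _ => hclosed k
  obtain ⟨f, hf⟩ := IsCompact.nonempty_iInter_of_sequence_nonempty_isCompact_isClosed V
    (fun K => Set.biInter_subset_biInter_left fun k hk =>
      Finset.mem_range.2 (Nat.lt_succ_of_lt (Finset.mem_range.1 hk)))
    (fun K => by simpa [V, Set.Nonempty] using h K) (hV 0).isCompact hV
  simp only [V, Set.mem_iInter] at hf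
  exact ⟨f, fun k => hf (k + 1) k (Finset.mem_range.2 k.lt_succ_self)⟩

namespace SyncMDP

variable {L A : Type}

theorem Hist.len_extend (h : Hist L A) (a : A) (l : L) : (h.extend a l).len = h.len + 1 := by
  simp [Hist.extend, Hist.len]

theorem Hist.extend_inj {h h' : Hist L A} {a a' : A} {l l' : L} :
    h.extend a l = h'.extend a' l' ↔ h = h' ∧ a = a' ∧ l = l' := by
  obtain ⟨s, t⟩ := h
  obtain ⟨s', t'⟩ := h'
  simp [Hist.extend, and_assoc]

theorem prAux_congr (δ : L → A → L → ℝ) {β β' : Hist L A → A → ℝ} (rest : List (A × L)) :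
    ∀ (cur : L) (pre : Hist L A),
      (∀ q : Hist L A, pre.len ≤ q.len → q.len < pre.len + rest.length → β q = β' q) →
      prAux δ β cur pre rest = prAux δ β' cur pre rest := by
  induction rest with
  | nil => intro _ _ _; rfl
  | cons p rest ih =>
    intro cur pre hag
    obtain ⟨a, l⟩ := p
    have hpre : β pre = β' pre := hag pre le_rfl (by simp)
    have htail := ih l (pre.extend a l) fun q h₁ h₂ => by
      rw [Hist.len_extend] at h₁ h₂
      exact hag q (by omega) (by simp only [List.length_cons]; omega)
    simp only [prAux, hpre, htail]

theorem prAux_append (δ : L → A → L → ℝ) (β : Hist L A → A → ℝ) (s t : List (A × L)) :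
    ∀ (cur : L) (pre : Hist L A), prAux δ β cur pre (s ++ t) = prAux δ β cur pre s *
      prAux δ β (s.foldl (fun _ p => p.2) cur) ⟨pre.start, pre.steps ++ s⟩ t := by
  induction s with
  | nil => intro cur pre; simp [prAux]
  | cons p s ih =>
    intro cur pre
    obtain ⟨a, l⟩ := p
    simp only [List.cons_append, prAux, List.foldl_cons, ih]
    simp [Hist.extend, mul_assoc]

theorem pr_extend (μ0 : L → ℝ) (δ : L → A → L → ℝ) (β : Hist L A → A → ℝ) (h : Hist L A)
    (a : A) (l : L) : pr μ0 δ β (h.extend a l) = pr μ0 δ β h * (β h a * δ h.last a l) := by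
  simp only [pr, Hist.extend, prAux_append, prAux, List.nil_append, mul_one]
  rw [mul_assoc]
  rfl

theorem prAux_update [DecidableEq L] [DecidableEq A] [Fintype A] (δ : L → A → L → ℝ)
    (β : Hist L A → A → ℝ) (h₀ : Hist L A) {d : A → ℝ} (hd : ∑ a, d a = 1)
    (rest : List (A × L)) : ∀ (cur : L) (pre : Hist L A),
      prAux δ (Function.update β h₀ d) cur pre rest =
        ∑ a, d a * prAux δ (Function.update β h₀ (Pi.single a 1)) cur pre rest := by
  induction rest with
  | nil => intro _ _; simp [prAux, hd]
  | cons p rest ih =>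
    intro cur pre
    obtain ⟨b, l⟩ := p
    by_cases hpre : pre = h₀
    · subst hpre
      have htail : ∀ e : A → ℝ, prAux δ (Function.update β pre e) l (pre.extend b l) rest =
          prAux δ β l (pre.extend b l) rest := fun e =>
        prAux_congr δ rest l _ fun q hq _ =>
          Function.update_of_ne (fun h => by rw [h, Hist.len_extend] at hq; omega) _ _
      simp only [prAux, Function.update_self, htail, Pi.single_apply, ite_mul, one_mul,
        zero_mul, mul_ite, mul_zero, Finset.sum_ite_eq, Finset.mem_univ, if_true, mul_assoc]
    · simp only [prAux, Function.update_of_ne hpre, ih, Finset.mul_sum]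
      exact Finset.sum_congr rfl fun a _ => by ring

theorem IsDist.nonempty {S : Type} [Fintype S] {d : S → ℝ} (hd : IsDist d) : Nonempty S := by
  by_contra hS
  simpa [not_nonempty_iff.1 hS] using hd.2

theorem le_dnorm [Fintype L] [DecidableEq L] (X : L → ℝ) (l : L) : X l ≤ dnorm X :=
  le_ciSup (Finite.bddAbove_range X) l

theorem dnorm_le [Fintype L] [DecidableEq L] [Nonempty L] {X : L → ℝ} {c : ℝ}
    (hX : ∀ l, X l ≤ c) : dnorm X ≤ c :=
  ciSup_le hX

theorem pr_nonneg [Fintype L] [Fintype A] {μ0 : L → ℝ} {δ : L → A → L → ℝ}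
    {β : Hist L A → A → ℝ} (hμ0 : IsDist μ0) (hδ : IsTrans δ) (hβ : IsStrategy β)
    (h : Hist L A) : 0 ≤ pr μ0 δ β h := by
  suffices ∀ rest cur pre, 0 ≤ prAux δ β cur pre rest from mul_nonneg (hμ0.1 _) (this _ _ _)
  intro rest
  induction rest with
  | nil => intro _ _; exact zero_le_one
  | cons p rest ih =>
    intro cur pre
    exact mul_nonneg (mul_nonneg ((hβ _).1 _) ((hδ _ _).1 _)) (ih _ _)

section PureStrategy

variable [DecidableEq A]

def pureOf (f : Hist L A → A) : Hist L A → A → ℝ := fun h => Pi.single (f h) 1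

theorem pureStrat_pureOf (f : Hist L A → A) : PureStrat (pureOf f) := fun h =>
  ⟨f h, Pi.single_eq_same _ _⟩

theorem isStrategy_pureOf [Fintype A] (f : Hist L A → A) : IsStrategy (pureOf f) := fun h =>
  ⟨(Pi.single_nonneg.2 zero_le_one : 0 ≤ pureOf f h), by simp [pureOf]⟩

end PureStrategy

theorem IsStrategy.nonempty [Fintype A] [Nonempty L] {α : Hist L A → A → ℝ}
    (hα : IsStrategy α) : Nonempty A := by
  by_contra hA
  simpa [not_nonempty_iff.1 hA] using (hα ⟨Classical.arbitrary L, []⟩).2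

section Expectation

variable [DecidableEq L] [Fintype A] [DecidableEq A]

/-- The expectation of `φ g` when `g` agrees with `f` outside `t` and the values `g h`, `h ∈ t`,
are drawn independently with `g h ∼ α h`. -/
noncomputable def expectOver (α : Hist L A → A → ℝ) :
    List (Hist L A) → (Hist L A → A) → ((Hist L A → A) → ℝ) →ₗ[ℝ] ℝ
  | [], f => LinearMap.proj f
  | h :: t, f => ∑ a, α h a • expectOver α t (Function.update f h a)

variable {α : Hist L A → A → ℝ}

theorem expectOver_cons (h : Hist L A) (t : List (Hist L A)) (f : Hist L A → A)
    (φ : (Hist L A → A) → ℝ) :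
    expectOver α (h :: t) f φ = ∑ a, α h a * expectOver α t (Function.update f h a) φ := by
  simp [expectOver]

theorem expectOver_mono (hα : IsStrategy α) (t : List (Hist L A)) (f : Hist L A → A)
    {φ ψ : (Hist L A → A) → ℝ} (hφψ : ∀ g, φ g ≤ ψ g) :
    expectOver α t f φ ≤ expectOver α t f ψ := by
  induction t generalizing f with
  | nil => exact hφψ f
  | cons h t ih =>
    simp only [expectOver_cons]
    exact Finset.sum_le_sum fun a _ => mul_le_mul_of_nonneg_left (ih _) ((hα h).1 a)

theorem exists_expectOver_le (hα : IsStrategy α) (t : List (Hist L A)) (f : Hist L A → A)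
    (φ : (Hist L A → A) → ℝ) : ∃ g, expectOver α t f φ ≤ φ g := by
  induction t generalizing f with
  | nil => exact ⟨f, le_rfl⟩
  | cons h t ih =>
    obtain ⟨a, -, ha⟩ := Finset.exists_max_image Finset.univ
      (fun a => expectOver α t (Function.update f h a) φ) ⟨f h, Finset.mem_univ _⟩
    obtain ⟨g, hg⟩ := ih (Function.update f h a)
    refine ⟨g, le_trans ?_ hg⟩
    calc expectOver α (h :: t) f φ
        ≤ ∑ b, α h b * expectOver α t (Function.update f h a) φ := by
          rw [expectOver_cons]
          exact Finset.sum_le_sum fun b _ =>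
            mul_le_mul_of_nonneg_left (ha b (Finset.mem_univ _)) ((hα h).1 b)
      _ = expectOver α t (Function.update f h a) φ := by rw [← Finset.sum_mul, (hα h).2, one_mul]

end Expectation

variable [Fintype L] [DecidableEq L] [Fintype A] [DecidableEq A]

theorem mem_hists {n : ℕ} {h : Hist L A} : h ∈ hists L A n ↔ h.len = n := by
  induction n generalizing h with
  | zero =>
    obtain ⟨s, steps⟩ := h
    simp [hists, Hist.len]
  | succ n ih =>
    simp only [hists, Finset.mem_biUnion, Finset.mem_image, Finset.mem_univ, true_and, ih]
    constructor
    · rintro ⟨h', rfl, p, rfl⟩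
      exact Hist.len_extend _ _ _
    · obtain ⟨s, steps⟩ := h
      rcases steps.eq_nil_or_concat' with rfl | ⟨steps, p, rfl⟩
      · simp [Hist.len]
      · intro hlen
        exact ⟨⟨s, steps⟩, by simpa [Hist.len] using hlen, p, rfl⟩

variable (L A) in
def histsBelow (N : ℕ) : Finset (Hist L A) := (Finset.range N).biUnion (hists L A)

theorem mem_histsBelow {N : ℕ} {q : Hist L A} : q ∈ histsBelow L A N ↔ q.len < N := by
  simp [histsBelow, mem_hists]

theorem sum_hists_succ (n : ℕ) (F : Hist L A → ℝ) :
    ∑ h ∈ hists L A (n + 1), F h = ∑ h ∈ hists L A n, ∑ p : A × L, F (h.extend p.1 p.2) := by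
  rw [hists, Finset.sum_biUnion]
  · refine Finset.sum_congr rfl fun h _ => Finset.sum_image fun p _ q _ hpq => ?_
    obtain ⟨-, ha, hl⟩ := Hist.extend_inj.1 hpq
    exact Prod.ext ha hl
  · intro h _ h' _ hne
    simp only [Function.onFun, Finset.disjoint_left, Finset.mem_image, Finset.mem_univ, true_and]
    rintro _ ⟨p, rfl⟩ ⟨q, hq⟩
    exact hne (Hist.extend_inj.1 hq).1.symm

theorem sum_pr {μ0 : L → ℝ} {δ : L → A → L → ℝ} {β : Hist L A → A → ℝ} (hμ0 : IsDist μ0)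
    (hδ : IsTrans δ) (hβ : IsStrategy β) (n : ℕ) : ∑ h ∈ hists L A n, pr μ0 δ β h = 1 := by
  induction n with
  | zero =>
    rw [hists, Finset.sum_image fun _ _ _ _ h => congrArg Hist.start h]
    simpa [pr, prAux] using hμ0.2
  | succ n ih =>
    rw [sum_hists_succ, ← ih]
    refine Finset.sum_congr rfl fun h _ => ?_
    simp only [pr_extend, ← Finset.mul_sum, Fintype.sum_prod_type, (hδ _ _).2, mul_one,
      (hβ h).2]

section Outcome

variable {μ0 : L → ℝ} {δ : L → A → L → ℝ}

theorem outcome_congr {β β' : Hist L A → A → ℝ} {n : ℕ}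
    (hag : ∀ q : Hist L A, q.len < n → β q = β' q) :
    outcome μ0 δ β n = outcome μ0 δ β' n := by
  funext l
  refine Finset.sum_congr rfl fun h hh => congrArg _ (prAux_congr δ _ _ _ fun q _ hq => hag q ?_)
  have hlen := mem_hists.1 (Finset.mem_filter.1 hh).1
  simp only [Hist.len, List.length_nil, zero_add] at hq hlen ⊢
  omega

theorem outcome_pureOf_congr {f g : Hist L A → A} {n : ℕ}
    (hfg : ∀ q ∈ histsBelow L A n, f q = g q) :
    outcome μ0 δ (pureOf f) n = outcome μ0 δ (pureOf g) n :=
  outcome_congr fun q hq => by rw [pureOf, pureOf, hfg q (mem_histsBelow.2 hq)]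

theorem outcome_update (β : Hist L A → A → ℝ) (h₀ : Hist L A) {d : A → ℝ} (hd : ∑ a, d a = 1)
    (n : ℕ) (l : L) : outcome μ0 δ (Function.update β h₀ d) n l =
      ∑ a, d a * outcome μ0 δ (Function.update β h₀ (Pi.single a 1)) n l := by
  simp only [outcome, pr, prAux_update δ β h₀ hd, Finset.mul_sum]
  rw [Finset.sum_comm]
  exact Finset.sum_congr rfl fun _ _ => Finset.sum_congr rfl fun _ _ => by ring

theorem outcome_nonneg (hμ0 : IsDist μ0) (hδ : IsTrans δ) {β : Hist L A → A → ℝ}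
    (hβ : IsStrategy β) (n : ℕ) (l : L) : 0 ≤ outcome μ0 δ β n l :=
  Finset.sum_nonneg fun h _ => pr_nonneg hμ0 hδ hβ h

theorem outcome_le_one (hμ0 : IsDist μ0) (hδ : IsTrans δ) {β : Hist L A → A → ℝ}
    (hβ : IsStrategy β) (n : ℕ) (l : L) : outcome μ0 δ β n l ≤ 1 :=
  sum_pr hμ0 hδ hβ n ▸ Finset.sum_le_sum_of_subset_of_nonneg (Finset.filter_subset _ _)
    fun h _ _ => pr_nonneg hμ0 hδ hβ h

theorem weaklySync_iff_frequently [Nonempty L] (hμ0 : IsDist μ0) (hδ : IsTrans δ) {β : Hist L A → A → ℝ}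
    (hβ : IsStrategy β) :
    WeaklySync μ0 δ β ↔ ∀ ε > 0, ∃ᶠ n in atTop, 1 - ε < dnorm (outcome μ0 δ β n) :=
  limsup_eq_iff_frequently_lt
    (fun n => (outcome_nonneg hμ0 hδ hβ n (Classical.arbitrary L)).trans (le_dnorm _ _))
    (fun n => dnorm_le (outcome_le_one hμ0 hδ hβ n))

end Outcome

def hybrid (α : Hist L A → A → ℝ) (t : List (Hist L A)) (f : Hist L A → A) :
    Hist L A → A → ℝ :=
  fun h => if h ∈ t then α h else pureOf f h

theorem expectOver_outcome_pureOf_eq_hybrid (μ0 : L → ℝ) (δ : L → A → L → ℝ)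
    {α : Hist L A → A → ℝ} (hα : IsStrategy α) {t : List (Hist L A)} (ht : t.Nodup)
    (f : Hist L A → A) (n : ℕ) (l : L) :
    expectOver α t f (fun g => outcome μ0 δ (pureOf g) n l) = outcome μ0 δ (hybrid α t f) n l := by
  induction t generalizing f with
  | nil => rfl
  | cons h t ih =>
    obtain ⟨hh, ht⟩ := List.nodup_cons.1 ht
    have hupd : ∀ a, hybrid α t (Function.update f h a) =
        Function.update (hybrid α t f) h (Pi.single a 1) := by
      intro a
      funext q
      by_cases hq : q = h
      · subst hq; simp [hybrid, pureOf, hh]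
      · simp [hybrid, pureOf, hq]
    have hcons : hybrid α (h :: t) f = Function.update (hybrid α t f) h (α h) := by
      funext q
      by_cases hq : q = h
      · subst hq; simp [hybrid]
      · simp [hybrid, hq]
    rw [expectOver_cons, hcons, outcome_update _ _ (hα h).2]
    simp only [ih ht, hupd]

theorem expectOver_outcome_pureOf (μ0 : L → ℝ) (δ : L → A → L → ℝ) {α : Hist L A → A → ℝ}
    (hα : IsStrategy α) {n N : ℕ} (hn : n ≤ N) (f : Hist L A → A) (l : L) :
    expectOver α (histsBelow L A N).toList f (fun g => outcome μ0 δ (pureOf g) n l) =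
      outcome μ0 δ α n l := by
  rw [expectOver_outcome_pureOf_eq_hybrid μ0 δ hα (Finset.nodup_toList _)]
  exact congrFun (outcome_congr fun q hq => if_pos <| Finset.mem_toList.2 <|
    mem_histsBelow.2 <| hq.trans_le hn) l

theorem dnorm_outcome_le_expectOver (μ0 : L → ℝ) (δ : L → A → L → ℝ) [Nonempty L]
    {α : Hist L A → A → ℝ} (hα : IsStrategy α) {n N : ℕ} (hn : n ≤ N) (f : Hist L A → A) :
    dnorm (outcome μ0 δ α n) ≤
      expectOver α (histsBelow L A N).toList f (fun g => dnorm (outcome μ0 δ (pureOf g) n)) :=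
  dnorm_le fun l => expectOver_outcome_pureOf μ0 δ hα hn f l ▸
    expectOver_mono hα _ f fun _ => le_dnorm _ l

theorem exists_pure_sum_mul_dnorm_ge (μ0 : L → ℝ) (δ : L → A → L → ℝ) [Nonempty L]
    {α : Hist L A → A → ℝ} (hα : IsStrategy α) {ι : Type*} (s : Finset ι) (n : ι → ℕ)
    {w : ι → ℝ} (hw : ∀ i ∈ s, 0 ≤ w i) :
    ∃ f : Hist L A → A, ∑ i ∈ s, w i * dnorm (outcome μ0 δ α (n i)) ≤
      ∑ i ∈ s, w i * dnorm (outcome μ0 δ (pureOf f) (n i)) := by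
  obtain ⟨a⟩ := hα.nonempty
  set E := expectOver α (histsBelow L A (s.sup n)).toList fun _ => a
  obtain ⟨f, hf⟩ := exists_expectOver_le hα (histsBelow L A (s.sup n)).toList (fun _ => a)
    fun g => ∑ i ∈ s, w i * dnorm (outcome μ0 δ (pureOf g) (n i))
  refine ⟨f, le_trans ?_ hf⟩
  calc ∑ i ∈ s, w i * dnorm (outcome μ0 δ α (n i))
      ≤ ∑ i ∈ s, w i * E (fun g => dnorm (outcome μ0 δ (pureOf g) (n i))) :=
        Finset.sum_le_sum fun i hi => mul_le_mul_of_nonneg_left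
          (dnorm_outcome_le_expectOver μ0 δ hα (Finset.le_sup hi) _) (hw i hi)
    _ = E (fun g => ∑ i ∈ s, w i * dnorm (outcome μ0 δ (pureOf g) (n i))) := by
        rw [show (fun g => ∑ i ∈ s, w i * dnorm (outcome μ0 δ (pureOf g) (n i))) =
            ∑ i ∈ s, w i • fun g => dnorm (outcome μ0 δ (pureOf g) (n i)) by
          funext g; simp [Finset.sum_apply], map_sum]
        simp only [map_smul, smul_eq_mul]

theorem exists_pure_forall_dnorm_gt {μ0 : L → ℝ} {δ : L → A → L → ℝ} (hμ0 : IsDist μ0)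
    (hδ : IsTrans δ) {α : Hist L A → A → ℝ} (hα : IsStrategy α) {ε : ℕ → ℝ}
    (hε : ∀ k, 0 < ε k) {n : ℕ → ℕ} (hn : ∀ k, 1 - ε k ^ 2 < dnorm (outcome μ0 δ α (n k)))
    {K : ℕ} (hK : ∑ k ∈ Finset.range K, ε k ≤ 1) :
    ∃ f : Hist L A → A, ∀ k < K, 1 - ε k < dnorm (outcome μ0 δ (pureOf f) (n k)) := by
  have := hμ0.nonempty
  obtain ⟨f, hf⟩ := exists_pure_sum_mul_dnorm_ge μ0 δ hα (Finset.range K) n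
    (w := fun k => (ε k)⁻¹) fun k _ => (inv_pos.2 (hε k)).le
  refine ⟨f, fun k hk => ?_⟩
  set defect := fun k => (ε k)⁻¹ * (1 - dnorm (outcome μ0 δ (pureOf f) (n k)))
  have hdefect : ∀ k, 0 ≤ defect k := fun k => mul_nonneg (inv_pos.2 (hε k)).le
    (sub_nonneg.2 (dnorm_le (outcome_le_one hμ0 hδ (isStrategy_pureOf f) (n k))))
  have hα_defect : ∀ k, (ε k)⁻¹ * (1 - dnorm (outcome μ0 δ α (n k))) < ε k := fun k => by
    rw [inv_mul_lt_iff₀ (hε k)]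
    nlinarith [hn k]
  have hsum : ∑ j ∈ Finset.range K, defect j < 1 := by
    calc ∑ j ∈ Finset.range K, defect j
        ≤ ∑ j ∈ Finset.range K, (ε j)⁻¹ * (1 - dnorm (outcome μ0 δ α (n j))) := by
          simp only [defect, mul_sub, Finset.sum_sub_distrib]
          linarith
      _ < ∑ j ∈ Finset.range K, ε j :=
          Finset.sum_lt_sum_of_nonempty ⟨k, Finset.mem_range.2 hk⟩ fun j _ => hα_defect j
      _ ≤ 1 := hK
  have hk_defect : defect k < 1 :=
    (Finset.single_le_sum (fun j _ => hdefect j) (Finset.mem_range.2 hk)).trans_lt hsum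
  rw [inv_mul_lt_iff₀ (hε k)] at hk_defect
  linarith

/-- If an MDP has a weakly synchronizing (randomized) strategy,
then it has a weakly synchronizing pure strategy. -/
theorem pure_sufficient_weakly
    (μ0 : L → ℝ) (δ : L → A → L → ℝ)
    (hμ0 : IsDist μ0) (hδ : IsTrans δ)
    (h : ∃ α : Hist L A → A → ℝ, IsStrategy α ∧ WeaklySync μ0 δ α) :
    ∃ β : Hist L A → A → ℝ, IsStrategy β ∧ PureStrat β ∧ WeaklySync μ0 δ β := by
  obtain ⟨α, hα, hsync⟩ := h
  have := hμ0.nonempty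
  set ε : ℕ → ℝ := fun k => (1 / 2) ^ (k + 1)
  have hε : ∀ k, 0 < ε k := fun k => by positivity
  have hsum : ∀ K, ∑ k ∈ Finset.range K, ε k ≤ 1 := fun K => by
    simp only [ε, pow_succ, ← Finset.sum_mul]
    linarith [sum_geometric_two_le K]
  obtain ⟨n, hn_ge, hn⟩ : ∃ n : ℕ → ℕ,
      (∀ k, k ≤ n k) ∧ ∀ k, 1 - ε k ^ 2 < dnorm (outcome μ0 δ α (n k)) := by
    choose n hn using fun k =>
      frequently_atTop.1 ((weaklySync_iff_frequently hμ0 hδ hα).1 hsync _ (pow_pos (hε k) 2)) k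
    exact ⟨n, fun k => (hn k).1, fun k => (hn k).2⟩
  obtain ⟨f, hf⟩ := exists_forall_of_forall_lt (fun k => histsBelow L A (n k))
    (P := fun k f => 1 - ε k < dnorm (outcome μ0 δ (pureOf f) (n k)))
    (fun k f g hfg => by simp only [outcome_pureOf_congr hfg, imp_self])
    (fun K => exists_pure_forall_dnorm_gt hμ0 hδ hα hε hn (hsum K))
  refine ⟨pureOf f, isStrategy_pureOf f, pureStrat_pureOf f,
    (weaklySync_iff_frequently hμ0 hδ (isStrategy_pureOf f)).2 fun e he => frequently_atTop.2 fun k => ?_⟩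
  obtain ⟨m, hm⟩ := exists_pow_lt_of_lt_one he one_half_lt_one
  refine ⟨n (max k m), (le_max_left k m).trans (hn_ge _), lt_of_le_of_lt ?_ (hf (max k m))⟩
  have : ε (max k m) ≤ (1 / 2) ^ m :=
    pow_le_pow_of_le_one (by norm_num) (by norm_num) (by omega)
  linarith

end SyncMDP
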